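/- Every finitely generated torsion-free nilpotent group π is principal: for all finite subsets S, S' ⊆ π, the index of Z(S) ∩ Z(S') in Z(S) is either 1 or infinite. -/

import Mathlib

/-- Old Mathlib definition (removed since): no nontrivial element has finite order. -/
def Monoid.IsTorsionFree (G : Type*) [Monoid G] : Prop :=
  ∀ g : G, g ≠ 1 → ¬IsOfFinOrder g

/-!
In a torsion-free nilpotent group the successive quotients `Zᵢ₊₁ / Zᵢ` of the upper central
series are torsion-free: if `[x, y]` is central modulo `Zᵢ` then `[xⁿ, y] ≡ [x, y]ⁿ`, so torsion
in `Zᵢ₊₂ / Zᵢ₊₁` would produce torsion in `Zᵢ₊₁ / Zᵢ`. Hence `G ⧸ Z₁` is torsion-free as well,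
and induction on the nilpotency class shows that `n`-th roots are unique. So if `xⁿ` commutes
with `y`, then `(y x y⁻¹)ⁿ = xⁿ` gives `y x y⁻¹ = x`. Finally, a subgroup of finite index in `K`
contains a power of every element of `K`, so `K ⊓ Z(T)` is either all of `K` or of infinite index.
-/

open Subgroup QuotientGroup
open scoped commutatorElement

theorem commutatorElement_pow_left_of_commute {G : Type*} [Group G] {x y : G}
    (h : Commute x ⁅x, y⁆) (n : ℕ) : ⁅x ^ n, y⁆ = ⁅x, y⁆ ^ n := by
  have hconj : y * x⁻¹ * y⁻¹ = x⁻¹ * ⁅x, y⁆ := by rw [commutatorElement_def]; group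
  calc ⁅x ^ n, y⁆ = x ^ n * (y * x⁻¹ * y⁻¹) ^ n := by
        rw [commutatorElement_def, conj_pow, inv_pow]; simp only [mul_assoc]
    _ = x ^ n * (x⁻¹ ^ n * ⁅x, y⁆ ^ n) := by rw [hconj, h.inv_left.mul_pow]
    _ = ⁅x, y⁆ ^ n := by rw [inv_pow, mul_inv_cancel_left]

section TorsionFree

variable {G : Type*} [Group G]

theorem Monoid.IsTorsionFree.eq_one_of_pow_eq_one (htf : Monoid.IsTorsionFree G) {g : G}
    {n : ℕ} (hn : n ≠ 0) (h : g ^ n = 1) : g = 1 :=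
  of_not_not fun hg => htf g hg (isOfFinOrder_iff_pow_eq_one.mpr ⟨n, n.pos_of_ne_zero hn, h⟩)

theorem mem_upperCentralSeriesStep_of_pow_mem {N : Subgroup G} [N.Normal] {n : ℕ}
    (hN : ∀ x ∈ N.upperCentralSeriesStep, x ^ n ∈ N → x ∈ N) {x : G}
    (hx : ∀ y, ⁅x, y⁆ ∈ N.upperCentralSeriesStep)
    (hxn : x ^ n ∈ N.upperCentralSeriesStep) : x ∈ N.upperCentralSeriesStep := by
  intro y
  refine hN _ (hx y) ?_
  have hcentral : mk' N ⁅x, y⁆ ∈ center (G ⧸ N) := by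
    simpa only [Subgroup.upperCentralSeriesStep_eq_comap_center, mem_comap] using hx y
  have hpow : mk' N ⁅x ^ n, y⁆ = mk' N (⁅x, y⁆ ^ n) := by
    rw [map_commutatorElement] at hcentral
    rw [map_commutatorElement, map_pow, map_pow, map_commutatorElement]
    exact commutatorElement_pow_left_of_commute (mem_center_iff.mp hcentral (mk' N x)) n
  rw [← eq_one_iff, ← mk'_apply, ← hpow, mk'_apply, eq_one_iff]
  exact hxn y

theorem Monoid.IsTorsionFree.mem_upperCentralSeries_of_pow_mem (htf : Monoid.IsTorsionFree G)
    {n : ℕ} (hn : n ≠ 0) (i : ℕ) {x : G} (hx : x ∈ Subgroup.upperCentralSeries G (i + 1))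
    (hxn : x ^ n ∈ Subgroup.upperCentralSeries G i) : x ∈ Subgroup.upperCentralSeries G i := by
  induction i generalizing x with
  | zero =>
    rw [Subgroup.upperCentralSeries_zero, mem_bot] at hxn ⊢
    exact htf.eq_one_of_pow_eq_one hn hxn
  | succ i ih => exact mem_upperCentralSeriesStep_of_pow_mem (fun y hy => ih hy) hx hxn

theorem Monoid.IsTorsionFree.mem_center_of_pow_mem [Group.IsNilpotent G]
    (htf : Monoid.IsTorsionFree G) {n : ℕ} (hn : n ≠ 0) {x : G} (h : x ^ n ∈ center G) :
    x ∈ center G := by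
  have descend : ∀ j, x ∈ Subgroup.upperCentralSeries G (j + 1) → x ∈ center G := by
    intro j
    induction j with
    | zero => rw [zero_add, Subgroup.upperCentralSeries_one]; exact id
    | succ j ih =>
      have hle : center G ≤ Subgroup.upperCentralSeries G (j + 1) := by
        rw [← Subgroup.upperCentralSeries_one]
        exact Subgroup.upperCentralSeries_mono G (by omega)
      exact fun hx => ih (htf.mem_upperCentralSeries_of_pow_mem hn (j + 1) hx (hle h))
  obtain ⟨k, hk⟩ := Group.IsNilpotent.nilpotent (G := G)
  exact descend k (Subgroup.upperCentralSeries_mono G k.le_succ (hk ▸ mem_top x))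

theorem Monoid.IsTorsionFree.quotient_center [Group.IsNilpotent G]
    (htf : Monoid.IsTorsionFree G) : Monoid.IsTorsionFree (G ⧸ center G) := by
  intro g hg hfin
  obtain ⟨x, rfl⟩ := mk_surjective g
  obtain ⟨m, hm, hpow⟩ := isOfFinOrder_iff_pow_eq_one.mp hfin
  rw [← mk_pow, eq_one_iff] at hpow
  exact hg ((eq_one_iff _).mpr (htf.mem_center_of_pow_mem hm.ne' hpow))

theorem Monoid.IsTorsionFree.isMulTorsionFree [Group.IsNilpotent G]
    (htf : Monoid.IsTorsionFree G) : IsMulTorsionFree G := by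
  refine Group.nilpotent_center_quotient_ind
    (P := fun G [Group G] [Group.IsNilpotent G] => Monoid.IsTorsionFree G → IsMulTorsionFree G) G
    (fun _ _ _ _ => inferInstance) (fun G _ _ ih htf => ?_) htf
  refine ⟨fun n hn x y (hxy : x ^ n = y ^ n) => ?_⟩
  have hmk : (x : G ⧸ center G) = y :=
    (ih htf.quotient_center).pow_left_injective hn (by simp only [← mk_pow, hxy])
  obtain ⟨z, hz, rfl⟩ : ∃ z ∈ center G, y = x * z :=
    ⟨x⁻¹ * y, QuotientGroup.eq.mp hmk, (mul_inv_cancel_left x y).symm⟩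
  have hzn : z ^ n = 1 := by
    rwa [(show Commute x z from mem_center_iff.mp hz x).mul_pow, left_eq_mul] at hxy
  rw [htf.eq_one_of_pow_eq_one hn hzn, mul_one]

end TorsionFree

section IsMulTorsionFree

variable {G : Type*} [Group G] [IsMulTorsionFree G]

theorem Commute.of_pow_left {x y : G} {n : ℕ} (hn : n ≠ 0) (h : Commute (x ^ n) y) :
    Commute x y := by
  have hconj : (y * x * y⁻¹) ^ n = x ^ n := by
    rw [conj_pow, h.eq.symm, mul_inv_cancel_right]
  exact (mul_inv_eq_iff_eq_mul.mp (pow_left_injective hn hconj)).symm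

theorem mem_centralizer_of_pow_mem {T : Set G} {x : G} {n : ℕ} (hn : n ≠ 0)
    (h : x ^ n ∈ centralizer T) : x ∈ centralizer T :=
  fun t ht => (Commute.of_pow_left hn (h t ht).symm).symm.eq

theorem relIndex_inf_centralizer_eq_one_or_eq_zero (K : Subgroup G) (T : Set G) :
    (K ⊓ centralizer T).relIndex K = 1 ∨ (K ⊓ centralizer T).relIndex K = 0 := by
  refine or_iff_not_imp_right.mpr fun hfin => relIndex_eq_one.mpr fun k hk => ?_
  obtain ⟨n, hn, -, hkn⟩ := exists_pow_mem_of_relIndex_ne_zero hfin hk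
  exact ⟨hk, mem_centralizer_of_pow_mem hn.ne' hkn.1.2⟩

end IsMulTorsionFree

theorem stmt4_general {π : Type*} [Group π] [Group.IsNilpotent π]
    (htf : Monoid.IsTorsionFree π) :
    ∀ S S' : Finset π,
      (Subgroup.centralizer (S : Set π) ⊓ Subgroup.centralizer (S' : Set π)).relIndex
          (Subgroup.centralizer (S : Set π)) = 1 ∨
      (Subgroup.centralizer (S : Set π) ⊓ Subgroup.centralizer (S' : Set π)).relIndex
          (Subgroup.centralizer (S : Set π)) = 0 := by
  have := htf.isMulTorsionFree
  exact fun S S' => relIndex_inf_centralizer_eq_one_or_eq_zero _ _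

/-- Every finitely generated torsion-free nilpotent group is principal: for all
finite subsets `S, S' ⊆ π`, the index of `Z(S) ∩ Z(S')` in `Z(S)` is either `1`
or infinite (infinite index is encoded by relative index `0`). -/
theorem stmt4 {π : Type*} [Group π] [Group.FG π] [Group.IsNilpotent π]
    (htf : Monoid.IsTorsionFree π) :
    ∀ S S' : Finset π,
      (Subgroup.centralizer (S : Set π) ⊓ Subgroup.centralizer (S' : Set π)).relIndex
          (Subgroup.centralizer (S : Set π)) = 1 ∨
      (Subgroup.centralizer (S : Set π) ⊓ Subgroup.centralizer (S' : Set π)).relIndex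
          (Subgroup.centralizer (S : Set π)) = 0 :=
  stmt4_general htf
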